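/- arXiv:2604.22735 — 6 statements merged into one kernel-verified Lean document; each statement's English description precedes it below -/
import Mathlib

section
/- The Lebesgue integral over the open simplex {(t₁, t₂, t₃) ∈ ℝ³ : 0 < t₁ < t₂ < t₃ < 1} of the function (t₁, t₂, t₃) ↦ 1/((1 − t₁) · t₂ · (t₃ − t₁)) is finite and equals 2 · ζ(3), where ζ(3) = ∑_{n ≥ 1} 1/n³. -/
/-!
Expanding `1/(1 - t₁)` and `1/(t₃ - t₁) = ∑ₖ t₁ᵏ / t₃ᵏ⁺¹` in geometric series and integrating term
by term turns the integral into `S = ∑_{m,k} 1/((m+1)(m+k+1)²) = ∑_{1 ≤ a ≤ n} 1/(a n²)`, which is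
Euler's sum `∑ₙ Hₙ/n²`. The double series `∑_{a,b ≥ 1} 1/(ab(a+b))` equals `S` by telescoping in
`a`, and equals `2 ∑_{1 ≤ a < n} 1/(a n²) = 2 (S - ζ(3))` by `1/(ab(a+b)) = (1/a + 1/b)/(a+b)²`
and symmetry; hence `S = 2 ζ(3)`.
-/

open MeasureTheory Filter Topology

def openSimplex3 : Set (ℝ × ℝ × ℝ) :=
  {t | 0 < t.1 ∧ t.1 < t.2.1 ∧ t.2.1 < t.2.2 ∧ t.2.2 < 1}

section Series

open Finset

lemma hasSum_sub_succ_of_antitone {f : ℕ → ℝ} (hf : Antitone f) (hf0 : Tendsto f atTop (𝓝 0)) :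
    HasSum (fun n => f n - f (n + 1)) (f 0) := by
  rw [hasSum_iff_tendsto_nat_of_nonneg fun n => sub_nonneg.2 (hf n.le_succ)]
  simp_rw [sum_range_sub']
  simpa using tendsto_const_nhds.sub hf0

lemma hasSum_sub_add_of_antitone {f : ℕ → ℝ} (hf : Antitone f) (hf0 : Tendsto f atTop (𝓝 0))
    (N : ℕ) : HasSum (fun n => f n - f (n + N)) (∑ j ∈ range N, f j) := by
  have shifted : ∀ j ∈ range N, HasSum (fun n => f (n + j) - f (n + j + 1)) (f j) :=
    fun j _ => by
      simpa [add_right_comm] using hasSum_sub_succ_of_antitone (f := fun n => f (n + j))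
        (hf.comp_monotone (monotone_id.add_const j)) (hf0.comp (tendsto_add_atTop_nat j))
  convert hasSum_sum shifted using 1
  ext n
  simpa [add_assoc] using (sum_range_sub' (fun j => f (n + j)) N).symm

lemma antitone_one_div_add {a : ℝ} (ha : 0 < a) : Antitone fun n : ℕ => 1 / (a + n) :=
  fun _ _ h => one_div_le_one_div_of_le (by positivity) (by gcongr)

lemma tendsto_one_div_add (a : ℝ) : Tendsto (fun n : ℕ => 1 / (a + n)) atTop (𝓝 0) := by
  simpa only [one_div, Function.comp_def] using
    tendsto_inv_atTop_zero.comp (tendsto_atTop_add_const_left atTop a tendsto_natCast_atTop_atTop)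

lemma hasSum_one_div_mul_add_harmonic {N : ℕ} (hN : N ≠ 0) :
    HasSum (fun m : ℕ => 1 / (((m : ℝ) + 1) * (m + 1 + N))) (harmonic N / N) := by
  have h := (hasSum_sub_add_of_antitone (antitone_one_div_add one_pos)
    (tendsto_one_div_add 1) N).div_const N
  rw [show ((harmonic N : ℚ) : ℝ) = ∑ j ∈ range N, 1 / (1 + (j : ℝ)) by
    simp [harmonic, add_comm]]
  refine h.congr_fun fun m => ?_
  push_cast
  field_simp
  ring

lemma hasSum_one_div_mul_succ {a : ℝ} (ha : 0 < a) :
    HasSum (fun k : ℕ => 1 / ((a + k) * (a + k + 1))) (1 / a) := by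
  have h := hasSum_sub_succ_of_antitone (antitone_one_div_add ha) (tendsto_one_div_add a)
  simp only [Nat.cast_zero, add_zero] at h
  refine h.congr_fun fun k => ?_
  push_cast
  field_simp
  ring

lemma summable_one_div_succ_pow {p : ℕ} (hp : 1 < p) :
    Summable fun n : ℕ => 1 / ((n : ℝ) + 1) ^ p := by
  simpa using (summable_nat_add_iff 1).2 (Real.summable_one_div_nat_pow.2 hp)

lemma HasSum.tsum_ofReal_eq {ι : Type*} {f : ι → ℝ} {a : ℝ} (h : HasSum f a)
    (hf : ∀ i, 0 ≤ f i) : ∑' i, ENNReal.ofReal (f i) = ENNReal.ofReal a := by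
  rw [← ENNReal.ofReal_tsum_of_nonneg hf h.summable, h.tsum_eq]

lemma ENNReal.tsum_prod_eq_tsum_sum_antidiagonal {A : Type*} [AddCommMonoid A]
    [HasAntidiagonal A] (f : A × A → ENNReal) :
    ∑' p, f p = ∑' n, ∑ p ∈ antidiagonal n, f p := by
  rw [← HasAntidiagonal.sigmaAntidiagonalEquivProd.tsum_eq, ENNReal.tsum_sigma']
  simp [sum_attach]

lemma tsum_prod_one_div_mul_sq_eq_tsum_harmonic :
    ∑' p : ℕ × ℕ, ENNReal.ofReal (1 / (((p.1 : ℝ) + 1) * (p.1 + p.2 + 1) ^ 2)) =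
      ∑' n : ℕ, ENNReal.ofReal (harmonic (n + 1) / ((n : ℝ) + 1) ^ 2) := by
  rw [ENNReal.tsum_prod_eq_tsum_sum_antidiagonal]
  refine tsum_congr fun n => ?_
  rw [← ENNReal.ofReal_sum_of_nonneg fun p _ => by positivity]
  congr 1
  have on_antidiagonal : ∀ p ∈ antidiagonal n,
      1 / (((p.1 : ℝ) + 1) * (p.1 + p.2 + 1) ^ 2) = 1 / (((p.1 : ℝ) + 1) * (n + 1) ^ 2) :=
    fun p hp => by rw [← HasAntidiagonal.mem_antidiagonal.1 hp]; push_cast; ring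
  rw [sum_congr rfl on_antidiagonal, Nat.sum_antidiagonal_eq_sum_range_succ_mk,
    harmonic]
  push_cast
  rw [sum_div]
  refine sum_congr rfl fun m _ => ?_
  field_simp

lemma tsum_prod_one_div_mul_mul_eq_tsum_harmonic :
    ∑' p : ℕ × ℕ, ENNReal.ofReal (1 / (((p.1 : ℝ) + 1) * (p.2 + 1) * (p.1 + p.2 + 2))) =
      ∑' n : ℕ, ENNReal.ofReal (harmonic (n + 1) / ((n : ℝ) + 1) ^ 2) := by
  rw [ENNReal.tsum_prod', ENNReal.tsum_comm]
  refine tsum_congr fun n => ?_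
  refine HasSum.tsum_ofReal_eq ?_ fun m => by positivity
  have h := (hasSum_one_div_mul_add_harmonic n.succ_ne_zero).div_const ((n : ℝ) + 1)
  rw [div_div, Nat.cast_succ, ← sq] at h
  refine h.congr_fun fun m => ?_
  field_simp
  ring

lemma tsum_prod_one_div_mul_mul_eq_two_mul :
    ∑' p : ℕ × ℕ, ENNReal.ofReal (1 / (((p.1 : ℝ) + 1) * (p.2 + 1) * (p.1 + p.2 + 2))) =
      2 * ∑' p : ℕ × ℕ, ENNReal.ofReal (1 / (((p.1 : ℝ) + 1) * (p.1 + p.2 + 2) ^ 2)) := by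
  have partial_fractions : ∀ p : ℕ × ℕ,
      ENNReal.ofReal (1 / (((p.1 : ℝ) + 1) * (p.2 + 1) * (p.1 + p.2 + 2))) =
        ENNReal.ofReal (1 / (((p.1 : ℝ) + 1) * (p.1 + p.2 + 2) ^ 2)) +
          ENNReal.ofReal (1 / (((p.swap.1 : ℝ) + 1) * (p.swap.1 + p.swap.2 + 2) ^ 2)) := by
    intro p
    rw [← ENNReal.ofReal_add (by positivity) (by positivity)]
    congr 1
    simp only [Prod.fst_swap, Prod.snd_swap]
    field_simp
    ring
  rw [tsum_congr partial_fractions, ENNReal.tsum_add, two_mul]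
  congr 1
  exact (Equiv.prodComm ℕ ℕ).tsum_eq fun p =>
    ENNReal.ofReal (1 / (((p.1 : ℝ) + 1) * (p.1 + p.2 + 2) ^ 2))

lemma tsum_prod_one_div_mul_sq_eq_add :
    ∑' p : ℕ × ℕ, ENNReal.ofReal (1 / (((p.1 : ℝ) + 1) * (p.1 + p.2 + 1) ^ 2)) =
      ∑' n : ℕ, ENNReal.ofReal (1 / ((n : ℝ) + 1) ^ 3) +
        ∑' p : ℕ × ℕ, ENNReal.ofReal (1 / (((p.1 : ℝ) + 1) * (p.1 + p.2 + 2) ^ 2)) := by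
  rw [ENNReal.tsum_prod', ENNReal.tsum_prod', ← ENNReal.tsum_add]
  refine tsum_congr fun m => ?_
  rw [tsum_eq_zero_add' ENNReal.summable]
  congr 1
  · push_cast
    ring_nf
  · refine tsum_congr fun k => ?_
    push_cast
    ring_nf

lemma tsum_prod_one_div_mul_sq_add_two_ne_top :
    ∑' p : ℕ × ℕ, ENNReal.ofReal (1 / (((p.1 : ℝ) + 1) * (p.1 + p.2 + 2) ^ 2)) ≠ ⊤ := by
  have bound : ∀ p : ℕ × ℕ, ENNReal.ofReal (1 / (((p.1 : ℝ) + 1) * (p.1 + p.2 + 2) ^ 2)) ≤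
      ENNReal.ofReal (1 / ((p.1 : ℝ) + 1) * (1 / ((p.1 + 1 + p.2) * (p.1 + 1 + p.2 + 1)))) := by
    intro p
    gcongr ENNReal.ofReal ?_
    rw [one_div_mul_one_div]
    gcongr
    nlinarith
  have row_sum : ∀ m : ℕ,
      ∑' k : ℕ, ENNReal.ofReal (1 / ((m : ℝ) + 1) * (1 / ((m + 1 + k) * (m + 1 + k + 1)))) =
        ENNReal.ofReal (1 / ((m : ℝ) + 1) ^ 2) := fun m => by
    refine HasSum.tsum_ofReal_eq ?_ fun k => by positivity
    rw [sq, ← one_div_mul_one_div]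
    exact (hasSum_one_div_mul_succ (by positivity)).mul_left _
  refine ne_top_of_le_ne_top ?_ (ENNReal.tsum_le_tsum bound)
  rw [ENNReal.tsum_prod', tsum_congr row_sum, ← ENNReal.ofReal_tsum_of_nonneg
    (fun m => by positivity) (summable_one_div_succ_pow one_lt_two)]
  exact ENNReal.ofReal_ne_top

lemma tsum_prod_one_div_mul_sq_eq_two_mul :
    ∑' p : ℕ × ℕ, ENNReal.ofReal (1 / (((p.1 : ℝ) + 1) * (p.1 + p.2 + 1) ^ 2)) =
      2 * ∑' n : ℕ, ENNReal.ofReal (1 / ((n : ℝ) + 1) ^ 3) := by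
  have twice : ∑' p : ℕ × ℕ, ENNReal.ofReal (1 / (((p.1 : ℝ) + 1) * (p.1 + p.2 + 1) ^ 2)) =
      2 * ∑' p : ℕ × ℕ, ENNReal.ofReal (1 / (((p.1 : ℝ) + 1) * (p.1 + p.2 + 2) ^ 2)) := by
    rw [tsum_prod_one_div_mul_sq_eq_tsum_harmonic, ← tsum_prod_one_div_mul_mul_eq_tsum_harmonic,
      tsum_prod_one_div_mul_mul_eq_two_mul]
  have peel := tsum_prod_one_div_mul_sq_eq_add
  rw [twice, two_mul] at peel
  rw [twice, (ENNReal.add_left_inj tsum_prod_one_div_mul_sq_add_two_ne_top).1 peel]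

end Series

open Set

section Fiberwise

variable {α β : Type*} [MeasurableSpace α] [MeasurableSpace β] {μ : Measure α} {ν : Measure β}
  {A : β → Set α} {B : Set β} {f : α × β → ENNReal}

lemma setLIntegral_fiber_eq_lintegral_indicator (hA : MeasurableSet {p : α × β | p.1 ∈ A p.2})
    (y : β) :
    ∫⁻ x in A y, f (x, y) ∂μ = ∫⁻ x, {p : α × β | p.1 ∈ A p.2}.indicator f (x, y) ∂μ := by
  have hAy : MeasurableSet (A y) := measurable_prodMk_right hA
  rw [← lintegral_indicator hAy]
  rfl

lemma measurable_setLIntegral_fiber [SFinite μ] (hA : MeasurableSet {p : α × β | p.1 ∈ A p.2})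
    (hf : Measurable f) : Measurable fun y => ∫⁻ x in A y, f (x, y) ∂μ := by
  simp_rw [setLIntegral_fiber_eq_lintegral_indicator hA]
  exact (hf.indicator hA).lintegral_prod_left'

lemma setLIntegral_prod_fiberwise [SFinite μ] [SFinite ν] (hB : MeasurableSet B)
    (hA : MeasurableSet {p : α × β | p.1 ∈ A p.2}) (hf : Measurable f) :
    ∫⁻ p in {p : α × β | p.2 ∈ B ∧ p.1 ∈ A p.2}, f p ∂μ.prod ν =
      ∫⁻ y in B, ∫⁻ x in A y, f (x, y) ∂μ ∂ν := by
  have hs : MeasurableSet {p : α × β | p.2 ∈ B ∧ p.1 ∈ A p.2} := (measurable_snd hB).inter hA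
  rw [← lintegral_indicator hs, lintegral_prod_symm _ (hf.indicator hs).aemeasurable,
    ← lintegral_indicator hB]
  congr 1 with y
  by_cases hy : y ∈ B
  · rw [indicator_of_mem hy, setLIntegral_fiber_eq_lintegral_indicator hA]
    congr 1 with x
    by_cases hx : x ∈ A y <;> simp [indicator, hx, hy]
  · simp [indicator, hy]

end Fiberwise

lemma measurableSet_mem_Ioo_zero {γ : Type*} [MeasurableSpace γ] {u : γ → ℝ} (hu : Measurable u) :
    MeasurableSet {p : ℝ × γ | p.1 ∈ Ioo 0 (u p.2)} :=
  (measurableSet_lt measurable_const measurable_fst).inter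
    (measurableSet_lt measurable_fst (hu.comp measurable_snd))

lemma openSimplex3_eq_setOf_mem_Ioo : openSimplex3 =
    {t | t.2 ∈ {q : ℝ × ℝ | q.2 ∈ Ioo 0 1 ∧ q.1 ∈ Ioo 0 q.2} ∧ t.1 ∈ Ioo 0 t.2.1} := by
  ext ⟨x, y, z⟩
  simp only [openSimplex3, mem_ofPred_eq, mem_Ioo]
  constructor
  · rintro ⟨h0x, hxy, hyz, hz1⟩
    exact ⟨⟨⟨h0x.trans (hxy.trans hyz), hz1⟩, h0x.trans hxy, hyz⟩, h0x, hxy⟩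
  · rintro ⟨⟨⟨-, hz1⟩, -, hyz⟩, h0x, hxy⟩
    exact ⟨h0x, hxy, hyz, hz1⟩

lemma measurableSet_openSimplex3 : MeasurableSet openSimplex3 :=
  measurableSet_setOfPred.2 (by fun_prop)

lemma lintegral_openSimplex3 {g : ℝ × ℝ × ℝ → ENNReal} (hg : Measurable g) :
    ∫⁻ t in openSimplex3, g t =
      ∫⁻ z in Ioo 0 1, ∫⁻ y in Ioo 0 z, ∫⁻ x in Ioo 0 y, g (x, y, z) := by
  have hQ : MeasurableSet {q : ℝ × ℝ | q.2 ∈ Ioo 0 1 ∧ q.1 ∈ Ioo 0 q.2} :=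
    (measurable_snd measurableSet_Ioo).inter (measurableSet_mem_Ioo_zero measurable_id)
  have hx := measurableSet_mem_Ioo_zero (u := fun q : ℝ × ℝ => q.1) measurable_fst
  rw [openSimplex3_eq_setOf_mem_Ioo, Measure.volume_eq_prod,
    setLIntegral_prod_fiberwise (A := fun q => Ioo 0 q.1) hQ hx hg, Measure.volume_eq_prod,
    setLIntegral_prod_fiberwise (A := fun z => Ioo 0 z) measurableSet_Ioo
      (measurableSet_mem_Ioo_zero measurable_id) (measurable_setLIntegral_fiber hx hg)]

lemma setLIntegral_Ioo_zero_ofReal_pow_div {c d : ℝ} (hc : 0 ≤ c) (hd : 0 ≤ d) (n : ℕ) :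
    ∫⁻ x in Ioo 0 c, ENNReal.ofReal (x ^ n / d) =
      ENNReal.ofReal (c ^ (n + 1) / ((n + 1) * d)) := by
  have hint : IntegrableOn (fun x : ℝ => x ^ n / d) (Ioc 0 c) :=
    (intervalIntegrable_iff_integrableOn_Ioc_of_le hc).1
      ((intervalIntegral.intervalIntegrable_pow n).div_const d)
  have hnonneg : 0 ≤ᵐ[volume.restrict (Ioc 0 c)] fun x : ℝ => x ^ n / d :=
    (ae_restrict_iff' measurableSet_Ioc).2 (ae_of_all _ fun x hx => div_nonneg (pow_nonneg hx.1.le n) hd)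
  rw [Measure.restrict_congr_set Ioo_ae_eq_Ioc, ← ofReal_integral_eq_lintegral_ofReal hint hnonneg,
    ← intervalIntegral.integral_of_le hc, intervalIntegral.integral_div, integral_pow]
  congr 1
  field_simp
  ring

lemma setLIntegral_openSimplex3_monomial (m k : ℕ) :
    ∫⁻ t in openSimplex3, ENNReal.ofReal (t.1 ^ (m + k) / (t.2.1 * t.2.2 ^ (k + 1))) =
      ENNReal.ofReal (1 / (((m : ℝ) + 1) * (m + k + 1) ^ 2)) := by
  have inner : ∀ z ∈ Ioo (0 : ℝ) 1, ∀ y ∈ Ioo 0 z,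
      ∫⁻ x in Ioo 0 y, ENNReal.ofReal (x ^ (m + k) / (y * z ^ (k + 1))) =
        ENNReal.ofReal (y ^ (m + k) / ((m + k + 1) * z ^ (k + 1))) := by
    rintro z ⟨hz, -⟩ y ⟨hy, -⟩
    rw [setLIntegral_Ioo_zero_ofReal_pow_div hy.le (by positivity)]
    congr 1
    push_cast
    field_simp
    ring
  have middle : ∀ z ∈ Ioo (0 : ℝ) 1,
      ∫⁻ y in Ioo 0 z, ENNReal.ofReal (y ^ (m + k) / ((m + k + 1) * z ^ (k + 1))) =
        ENNReal.ofReal (z ^ m / (m + k + 1) ^ 2) := by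
    rintro z ⟨hz, -⟩
    rw [setLIntegral_Ioo_zero_ofReal_pow_div hz.le (by positivity)]
    congr 1
    push_cast
    field_simp
    ring
  rw [lintegral_openSimplex3 (by fun_prop),
    setLIntegral_congr_fun measurableSet_Ioo fun z hz =>
      (setLIntegral_congr_fun measurableSet_Ioo (inner z hz)).trans (middle z hz),
    setLIntegral_Ioo_zero_ofReal_pow_div zero_le_one (by positivity), one_pow]

lemma hasSum_geometric_expansion {x y z : ℝ} (hx : 0 ≤ x) (hy : 0 < y) (hxz : x < z)
    (hx1 : x < 1) :
    HasSum (fun p : ℕ × ℕ => x ^ (p.1 + p.2) / (y * z ^ (p.2 + 1)))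
      (1 / ((1 - x) * y * (z - x))) := by
  have hz : 0 < z := hx.trans_lt hxz
  have h₁ := hasSum_geometric_of_lt_one hx hx1
  have h₂ := hasSum_geometric_of_lt_one (by positivity) ((div_lt_one hz).2 hxz)
  have h := (h₁.mul h₂ (h₁.summable.mul_of_nonneg h₂.summable (fun n => by positivity)
    (fun n => by positivity))).mul_left (1 / (y * z))
  have hzx : z - x ≠ 0 := by linarith
  have h1x : 1 - x ≠ 0 := by linarith
  rw [show 1 / ((1 - x) * y * (z - x)) = 1 / (y * z) * ((1 - x)⁻¹ * (1 - x / z)⁻¹) by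
    field_simp]
  refine h.congr_fun fun p => ?_
  rw [div_pow, pow_add, pow_succ]
  field_simp

lemma lintegral_openSimplex3_eq_two_mul :
    ∫⁻ t in openSimplex3, ENNReal.ofReal (1 / ((1 - t.1) * t.2.1 * (t.2.2 - t.1))) =
      2 * ∑' n : ℕ, ENNReal.ofReal (1 / ((n : ℝ) + 1) ^ 3) := by
  have expand : ∀ t ∈ openSimplex3,
      ENNReal.ofReal (1 / ((1 - t.1) * t.2.1 * (t.2.2 - t.1))) =
        ∑' p : ℕ × ℕ, ENNReal.ofReal (t.1 ^ (p.1 + p.2) / (t.2.1 * t.2.2 ^ (p.2 + 1))) := by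
    rintro ⟨x, y, z⟩ ⟨h0x, hxy, hyz, hz1⟩
    have hy : 0 < y := h0x.trans hxy
    have hz : 0 < z := hy.trans hyz
    exact ((hasSum_geometric_expansion h0x.le hy (hxy.trans hyz)
      (hxy.trans (hyz.trans hz1))).tsum_ofReal_eq fun p => by positivity).symm
  rw [setLIntegral_congr_fun measurableSet_openSimplex3 expand,
    lintegral_tsum fun p => by fun_prop,
    tsum_congr fun p : ℕ × ℕ => setLIntegral_openSimplex3_monomial p.1 p.2,
    tsum_prod_one_div_mul_sq_eq_two_mul]

lemma integrableOn_and_setIntegral_eq_of_setLIntegral_ofReal {α : Type*} [MeasurableSpace α]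
    {μ : Measure α} {s : Set α} {f : α → ℝ} {c : ℝ} (hs : MeasurableSet s)
    (hf : AEStronglyMeasurable f (μ.restrict s)) (hf₀ : ∀ x ∈ s, 0 ≤ f x) (hc : 0 ≤ c)
    (h : ∫⁻ x in s, ENNReal.ofReal (f x) ∂μ = ENNReal.ofReal c) :
    IntegrableOn f s μ ∧ ∫ x in s, f x ∂μ = c := by
  have hf₀' : 0 ≤ᵐ[μ.restrict s] f := (ae_restrict_iff' hs).2 (ae_of_all _ hf₀)
  refine ⟨⟨hf, (hasFiniteIntegral_iff_ofReal hf₀').2 (h ▸ ENNReal.ofReal_lt_top)⟩, ?_⟩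
  rw [integral_eq_lintegral_of_nonneg_ae hf₀' hf, h, ENNReal.toReal_ofReal hc]

/-- The Lebesgue integral over `{0 < t₁ < t₂ < t₃ < 1}` of
`1/((1 − t₁)·t₂·(t₃ − t₁))` is finite and equals `2·ζ(3)`. -/
theorem integral_I1_eq_two_zeta_three :
    IntegrableOn (fun t : ℝ × ℝ × ℝ => 1 / ((1 - t.1) * t.2.1 * (t.2.2 - t.1)))
      openSimplex3 ∧
    ∫ t in openSimplex3, 1 / ((1 - t.1) * t.2.1 * (t.2.2 - t.1)) =
      2 * ∑' n : ℕ, 1 / ((n : ℝ) + 1) ^ 3 := by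
  have hζ : 0 ≤ ∑' n : ℕ, 1 / ((n : ℝ) + 1) ^ 3 := tsum_nonneg fun n => by positivity
  have h := lintegral_openSimplex3_eq_two_mul
  rw [← ENNReal.ofReal_tsum_of_nonneg (fun n => by positivity)
      (summable_one_div_succ_pow (by norm_num)), ← ENNReal.ofReal_ofNat 2,
    ← ENNReal.ofReal_mul zero_le_two] at h
  refine integrableOn_and_setIntegral_eq_of_setLIntegral_ofReal measurableSet_openSimplex3
    (Measurable.aestronglyMeasurable (by fun_prop)) ?_ (by positivity) h
  rintro t ⟨h0x, hxy, hyz, hz1⟩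
  have h1x : 0 < 1 - t.1 := by linarith
  have hzx : 0 < t.2.2 - t.1 := by linarith
  have hy : 0 < t.2.1 := h0x.trans hxy
  positivity
end

section
/- Let G be a finite connected simple graph with edge set E, fixed orientation, incidence matrix B, h = |E| − |V| + 1, and a cycle basis matrix C, and let Λ_G(x) = Cᵀ · diagonal(x) · C be the associated graph Laplacian. Then for every x : E → ℝ, det Λ_G(x) = Ψ_G(x), the Kirchhoff graph polynomial of G evaluated at x. -/
open scoped Classical

/-- The Kirchhoff graph polynomial: the sum over spanning trees `T` of `G` of the
product of `x e` over all edges `e` of `G` not in `T`. -/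
noncomputable def kirchhoff {V : Type*} [Fintype V] (G : SimpleGraph V)
    (x : G.edgeSet → ℝ) : ℝ :=
  ∑ T ∈ Finset.univ.filter (fun T : SimpleGraph V => T ≤ G ∧ T.IsTree),
    ∏ e : G.edgeSet, if (e : Sym2 V) ∈ T.edgeSet then 1 else x e

/-- The incidence matrix of an oriented graph with source map `src` and
target map `tgt`. -/
noncomputable def incidence {V : Type*} [Fintype V] (G : SimpleGraph V)
    (src tgt : G.edgeSet → V) : Matrix V G.edgeSet ℤ :=
  fun v e => (if v = tgt e then 1 else 0) - (if v = src e then 1 else 0)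

/-- The graph Laplacian `Λ_G(x) = Cᵀ · diagonal(x) · C` associated to a cycle
basis matrix `C`. -/
noncomputable def graphLap {E : Type*} [Fintype E] {h : ℕ}
    (C : Matrix E (Fin h) ℤ) (x : E → ℝ) : Matrix (Fin h) (Fin h) ℝ :=
  (C.map (Int.cast : ℤ → ℝ)).transpose * Matrix.diagonal x * C.map (Int.cast : ℤ → ℝ)

/-!
By Cauchy–Binet applied to `Λ_G(x) = (diagonal x * C)ᵀ * C`, `det Λ_G(x)` is the sum over
`h`-element edge sets `S` of `(∏ e ∈ S, x e) * det (C_S) ^ 2`, where `C_S` keeps the rows of `C`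
indexed by `S`. Since the columns of `C` span exactly the integer flows of `G`, the minor `C_S` is
unimodular when the edges outside `S` form a spanning tree `T` (the fundamental cycles of `T` are
flows taking arbitrary prescribed values on `S`), and singular otherwise: then the `|V| - 1` edges
outside `S` contain a cycle, whose flow is nonzero but vanishes on `S`.
-/

open Finset Matrix SimpleGraph

section CauchyBinet

variable {ι R : Type*} [CommRing R] {h : ℕ}

-- Any enumeration will do: the Cauchy–Binet terms below do not depend on the choice.
noncomputable def enumOfCard (S : {S : Finset ι // S.card = h}) : Fin h ↪ ι :=
  (S.1.equivFinOfCardEq S.2).symm.toEmbedding.trans (Function.Embedding.subtype _)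

lemma map_enumOfCard (S : {S : Finset ι // S.card = h}) :
    univ.map (enumOfCard S) = S.1 := by
  ext a
  simp only [enumOfCard, mem_map, mem_univ, true_and, Function.Embedding.trans_apply,
    Equiv.coe_toEmbedding, Function.Embedding.coe_subtype]
  exact ⟨by rintro ⟨i, rfl⟩; exact Subtype.prop _,
    fun ha => ⟨equivFinOfCardEq S.2 ⟨a, ha⟩, by simp⟩⟩

lemma enumOfCard_mem (S : {S : Finset ι // S.card = h}) (i : Fin h) : enumOfCard S i ∈ S.1 :=
  map_enumOfCard S ▸ mem_map_of_mem _ (mem_univ i)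

lemma range_enumOfCard (S : {S : Finset ι // S.card = h}) :
    Set.range (enumOfCard S) = S.1 := by
  rw [← map_enumOfCard S]; simp

lemma det_transpose_mul_eq_sum_fun [Fintype ι] (A B : Matrix ι (Fin h) R) :
    (Aᵀ * B).det = ∑ f : Fin h → ι, (A.submatrix f id).det * ∏ i, B (f i) i :=
  calc (Aᵀ * B).det
      = ∑ f : Fin h → ι, ∑ σ : Equiv.Perm (Fin h),
          Equiv.Perm.sign σ • ∏ i, A (f i) (σ i) * B (f i) i := by
        simp only [det_apply, mul_apply, transpose_apply, prod_univ_sum,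
          Fintype.piFinset_univ, smul_sum]
        exact sum_comm
    _ = _ := by
        refine sum_congr rfl fun f _ => ?_
        rw [← det_transpose, det_apply, sum_mul]
        simp only [transpose_apply, submatrix_apply, id_eq, prod_mul_distrib, smul_mul_assoc]

lemma sum_perm_det_submatrix_comp (A B : Matrix ι (Fin h) R) (g : Fin h → ι) :
    ∑ σ : Equiv.Perm (Fin h), (A.submatrix (g ∘ σ) id).det * ∏ i, B (g (σ i)) i =
      (A.submatrix g id).det * (B.submatrix g id).det := by
  have hperm (σ : Equiv.Perm (Fin h)) :
      A.submatrix (g ∘ σ) id = (A.submatrix g id).submatrix σ id := rfl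
  simp only [hperm, det_permute, det_apply (B.submatrix g id), mul_sum, submatrix_apply, id_eq]
  refine sum_congr rfl fun σ _ => ?_
  simp only [Units.smul_def, zsmul_eq_mul]
  ring

lemma sum_injective_eq_sum_enumOfCard_comp [Fintype ι] {M : Type*} [AddCommMonoid M]
    (F : (Fin h → ι) → M) :
    ∑ f ∈ univ.filter Function.Injective, F f =
      ∑ S : {S : Finset ι // S.card = h}, ∑ σ : Equiv.Perm (Fin h),
        F (enumOfCard S ∘ σ) := by
  rw [sum_subtype _ (fun f => mem_filter_univ f)]
  symm
  refine (Fintype.sum_sigma fun p : (_ : {S : Finset ι // S.card = h}) × Equiv.Perm (Fin h) =>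
    F (enumOfCard p.1 ∘ p.2)).symm.trans ?_
  refine Fintype.sum_bijective
    (fun p : (_ : {S : Finset ι // S.card = h}) × Equiv.Perm (Fin h) =>
      (⟨enumOfCard p.1 ∘ p.2, (enumOfCard p.1).injective.comp p.2.injective⟩ :
        {f : Fin h → ι // Function.Injective f})) ⟨?_, ?_⟩ _ _ fun _ => rfl
  · rintro ⟨S, σ⟩ ⟨S', σ'⟩ heq
    have hrange := congrArg Set.range (congrArg Subtype.val heq)
    simp only [Set.range_comp, Equiv.range_eq_univ, Set.image_univ, range_enumOfCard] at hrange
    obtain rfl : S = S' := Subtype.ext (Finset.coe_injective hrange)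
    obtain rfl : σ = σ' :=
      Equiv.ext fun i => (enumOfCard S).injective (congrFun (congrArg Subtype.val heq) i)
    rfl
  · rintro ⟨f, hf⟩
    let S : {S : Finset ι // S.card = h} :=
      ⟨univ.image f, by simp [card_image_of_injective _ hf]⟩
    have hrange : Set.range f = Set.range (enumOfCard S) := by simp [range_enumOfCard, S]
    -- `σ i` is the position of `f i` in the enumeration of the image of `f`.
    refine ⟨⟨S, (Equiv.ofInjective f hf).trans ((Equiv.setCongr hrange).trans
      (Equiv.ofInjective _ (enumOfCard S).injective).symm)⟩, Subtype.ext (funext fun i => ?_)⟩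
    simp [Equiv.apply_ofInjective_symm]

theorem det_transpose_mul_eq_sum_minors [Fintype ι] (A B : Matrix ι (Fin h) R) :
    (Aᵀ * B).det = ∑ S : {S : Finset ι // S.card = h},
      (A.submatrix (enumOfCard S) id).det * (B.submatrix (enumOfCard S) id).det := by
  rw [det_transpose_mul_eq_sum_fun, ← sum_filter_of_ne (p := Function.Injective),
    sum_injective_eq_sum_enumOfCard_comp]
  · simp only [Function.comp_apply, sum_perm_det_submatrix_comp]
  · intro f _ hf
    contrapose! hf
    obtain ⟨i, j, hij, hne⟩ := Function.not_injective_iff.mp hf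
    rw [det_zero_of_row_eq hne (by ext; simp [hij]), zero_mul]

theorem det_transpose_mul_diagonal_mul [Fintype ι] (A : Matrix ι (Fin h) R) (x : ι → R) :
    (Aᵀ * diagonal x * A).det = ∑ S : {S : Finset ι // S.card = h},
      (∏ e ∈ S.1, x e) * (A.submatrix (enumOfCard S) id).det ^ 2 := by
  have hleft : Aᵀ * diagonal x = (diagonal x * A)ᵀ := by
    rw [transpose_mul, diagonal_transpose]
  rw [hleft, det_transpose_mul_eq_sum_minors]
  refine sum_congr rfl fun S _ => ?_
  have hsub : (diagonal x * A).submatrix (enumOfCard S) id =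
      diagonal (x ∘ enumOfCard S) * A.submatrix (enumOfCard S) id := by
    ext i j; simp [diagonal_mul]
  rw [hsub, det_mul, det_diagonal, ← map_enumOfCard S, prod_map]
  simp only [Function.comp_apply]
  ring

end CauchyBinet

section Flows

variable {V : Type*} {G : SimpleGraph V} (src : G.edgeSet → V)

noncomputable def edgeFlow (u w : V) : G.edgeSet → ℤ :=
  fun e => if (e : Sym2 V) = s(u, w) then (if src e = u then 1 else -1) else 0

noncomputable def walkFlow : {u v : V} → G.Walk u v → G.edgeSet → ℤ
  | _, _, .nil => 0
  | u, _, .cons (v := w) _ p => edgeFlow src u w + walkFlow p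

lemma walkFlow_apply_eq_zero {u v : V} (p : G.Walk u v) {e : G.edgeSet}
    (he : (e : Sym2 V) ∉ p.edges) : walkFlow src p e = 0 := by
  induction p with
  | nil => rfl
  | cons hadj p ih =>
    simp only [Walk.edges_cons, List.mem_cons, not_or] at he
    simp [walkFlow, edgeFlow, he.1, ih he.2]

lemma walkFlow_cons_apply {u w v : V} (hadj : G.Adj u w) (p : G.Walk w v) {e : G.edgeSet}
    (he : (e : Sym2 V) ∉ p.edges) :
    walkFlow src (.cons hadj p) e = edgeFlow src u w e := by
  simp [walkFlow, walkFlow_apply_eq_zero src p he]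

lemma walkFlow_ne_zero_of_isCycle {v : V} {c : G.Walk v v} (hc : c.IsCycle) :
    walkFlow src c ≠ 0 := by
  cases c with
  | nil => exact (Walk.not_isCycle_nil hc).elim
  | cons hadj p =>
    rw [Walk.cons_isCycle_iff] at hc
    intro h0
    have := congrFun h0 ⟨s(v, _), hadj⟩
    rw [walkFlow_cons_apply src hadj p hc.2, edgeFlow] at this
    split_ifs at this <;> simp_all

variable [Fintype V] {src} {tgt : G.edgeSet → V}

lemma incidence_mulVec_single (e : G.edgeSet) (c : ℤ) :
    incidence G src tgt *ᵥ Pi.single e c = c • (Pi.single (tgt e) 1 - Pi.single (src e) 1) := by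
  ext v
  simp [mulVec_single, incidence, Pi.single_apply, mul_comm]

variable (hor : ∀ e : G.edgeSet, (e : Sym2 V) = s(src e, tgt e))
include hor

lemma incidence_mulVec_edgeFlow {u w : V} (hadj : G.Adj u w) :
    incidence G src tgt *ᵥ edgeFlow src u w = Pi.single w 1 - Pi.single u 1 := by
  set e : G.edgeSet := ⟨s(u, w), hadj⟩
  have hsingle : edgeFlow src u w = Pi.single e (if src e = u then 1 else -1) := by
    ext e'
    by_cases he' : e' = e
    · subst he'; simp [edgeFlow, e]
    · have hne : (e' : Sym2 V) ≠ s(u, w) := fun h => he' (Subtype.ext h)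
      simp [edgeFlow, he', hne]
  have hends : s(src e, tgt e) = s(u, w) := (hor e).symm
  rw [hsingle, incidence_mulVec_single]
  rcases Sym2.eq_iff.mp hends with ⟨hs, ht⟩ | ⟨hs, ht⟩
  · simp [hs, ht]
  · simp [hs, ht, hadj.ne.symm]

lemma incidence_mulVec_walkFlow {u v : V} (p : G.Walk u v) :
    incidence G src tgt *ᵥ walkFlow src p = Pi.single v 1 - Pi.single u 1 := by
  induction p with
  | nil => simp [walkFlow]
  | cons hadj p ih =>
    rw [walkFlow, mulVec_add, incidence_mulVec_edgeFlow hor hadj, ih]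
    abel

end Flows

lemma SimpleGraph.IsAcyclic.isTree_of_card_edgeSet {V : Type*} [Finite V] [Nonempty V]
    {T : SimpleGraph V} (hT : T.IsAcyclic) (hcard : Nat.card T.edgeSet + 1 = Nat.card V) :
    T.IsTree := by
  obtain ⟨F, hTF, -, hF⟩ := connected_top.exists_isTree_le_of_le_of_isAcyclic le_top hT
  have hFcard := (isTree_iff_connected_and_card.mp hF).2
  have hedges : T.edgeSet = F.edgeSet := by
    refine Set.eq_of_subset_of_ncard_le (edgeSet_mono hTF) ?_ (Set.toFinite _)
    rw [← Nat.card_coe_set_eq, ← Nat.card_coe_set_eq]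
    omega
  rwa [edgeSet_inj.mp hedges]

section Cotrees

variable {V : Type*} [Fintype V] {G : SimpleGraph V} {src tgt : G.edgeSet → V} {h : ℕ}
  {C : Matrix G.edgeSet (Fin h) ℤ}

lemma card_edgeSet_deleteEdges_add_card (S : Finset G.edgeSet) :
    Nat.card (G.deleteEdges (Subtype.val '' (S : Set G.edgeSet))).edgeSet + S.card =
      Fintype.card G.edgeSet := by
  have hsub : Subtype.val '' (S : Set G.edgeSet) ⊆ G.edgeSet := by
    rintro _ ⟨e, -, rfl⟩; exact e.2
  have hle := Set.ncard_le_ncard hsub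
  rw [edgeSet_deleteEdges, Nat.card_coe_set_eq, Set.ncard_sdiff hsub,
    Set.ncard_image_of_injective _ Subtype.val_injective, Set.ncard_coe_finset] at *
  rw [← Nat.card_coe_set_eq, Nat.card_eq_fintype_card] at *
  omega

noncomputable def cotree (G T : SimpleGraph V) : Finset G.edgeSet :=
  univ.filter fun e => (e : Sym2 V) ∉ T.edgeSet

lemma deleteEdges_cotree {T : SimpleGraph V} (hTG : T ≤ G) :
    G.deleteEdges (Subtype.val '' (cotree G T : Set G.edgeSet)) = T := by
  rw [← edgeSet_inj, edgeSet_deleteEdges]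
  ext z
  have hz := @edgeSet_mono _ _ _ hTG z
  simp [cotree]
  tauto

lemma cotree_deleteEdges (S : Finset G.edgeSet) :
    cotree G (G.deleteEdges (Subtype.val '' (S : Set G.edgeSet))) = S := by
  ext e
  simp [cotree, edgeSet_deleteEdges]

lemma card_cotree_of_isTree (hh : (h : ℤ) = Fintype.card G.edgeSet - Fintype.card V + 1)
    {T : SimpleGraph V} (hTG : T ≤ G) (hT : T.IsTree) : (cotree G T).card = h := by
  have hcard := card_edgeSet_deleteEdges_add_card (cotree G T)
  have hTcard := (isTree_iff_connected_and_card.mp hT).2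
  rw [deleteEdges_cotree hTG] at hcard
  rw [Nat.card_eq_fintype_card (α := V)] at hTcard
  omega

lemma kirchhoff_eq_sum_isTree_deleteEdges
    (hh : (h : ℤ) = Fintype.card G.edgeSet - Fintype.card V + 1) (x : G.edgeSet → ℝ) :
    kirchhoff G x = ∑ S : {S : Finset G.edgeSet // S.card = h},
      if (G.deleteEdges (Subtype.val '' (S.1 : Set G.edgeSet))).IsTree then ∏ e ∈ S.1, x e
      else 0 := by
  rw [kirchhoff, ← sum_filter]
  refine sum_bij' (fun T hT => ⟨cotree G T,
      card_cotree_of_isTree hh (mem_filter.mp hT).2.1 (mem_filter.mp hT).2.2⟩)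
    (fun S _ => G.deleteEdges (Subtype.val '' (S.1 : Set G.edgeSet))) ?_ ?_ ?_ ?_ ?_
  · intro T hT
    rw [mem_filter_univ] at hT ⊢
    rw [deleteEdges_cotree hT.1]
    exact hT.2
  · intro S hS
    rw [mem_filter_univ] at hS ⊢
    exact ⟨deleteEdges_le _, hS⟩
  · intro T hT
    exact deleteEdges_cotree ((mem_filter_univ T).mp hT).1
  · intro S _
    exact Subtype.ext (cotree_deleteEdges S.1)
  · intro T _
    simp only [cotree, prod_filter, ite_not]

variable (hor : ∀ e : G.edgeSet, (e : Sym2 V) = s(src e, tgt e))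
  (hker : LinearMap.range C.mulVecLin = LinearMap.ker (incidence G src tgt).mulVecLin)
include hor hker

-- The witness is the flow around the fundamental cycle of `e`: `e` closed up by a path in `T`.
lemma exists_mulVec_eq_single_of_preconnected {T : SimpleGraph V} (hTG : T ≤ G)
    (hT : T.Preconnected) (e : G.edgeSet) :
    ∃ y, ∀ e' : G.edgeSet, (e' : Sym2 V) ∉ T.edgeSet →
      (C *ᵥ y) e' = (Pi.single e 1 : G.edgeSet → ℤ) e' := by
  obtain ⟨p⟩ := hT (tgt e) (src e)
  have hadj : G.Adj (src e) (tgt e) := by rw [← mem_edgeSet, ← hor]; exact e.2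
  let c : G.Walk (src e) (src e) := .cons hadj (p.mapLe hTG)
  obtain ⟨y, hy⟩ : walkFlow src c ∈ LinearMap.range C.mulVecLin := by
    rw [hker, LinearMap.mem_ker, mulVecLin_apply, incidence_mulVec_walkFlow hor, sub_self]
  refine ⟨y, fun e' he' => ?_⟩
  have he'p : (e' : Sym2 V) ∉ (p.mapLe hTG).edges := by
    rw [Walk.edges_mapLe_eq_edges]; exact fun h => he' (p.edges_subset_edgeSet h)
  rw [mulVecLin_apply] at hy
  rw [hy, walkFlow_cons_apply src hadj _ he'p, edgeFlow, ← hor]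
  by_cases he'e : e' = e
  · simp [he'e]
  · simp [he'e, Subtype.coe_inj]

lemma isUnit_submatrix_of_preconnected {T : SimpleGraph V} (hTG : T ≤ G) (hT : T.Preconnected)
    {g : Fin h → G.edgeSet} (hg : Function.Injective g)
    (hgT : ∀ i, (g i : Sym2 V) ∉ T.edgeSet) :
    IsUnit (C.submatrix g id) := by
  have hsingle (j : Fin h) : ∃ y, C.submatrix g id *ᵥ y = Pi.single j 1 := by
    obtain ⟨y, hy⟩ := exists_mulVec_eq_single_of_preconnected hor hker hTG hT (g j)
    refine ⟨y, funext fun i => ?_⟩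
    change (C *ᵥ y) (g i) = _
    simp [hy (g i) (hgT i), Pi.single_apply, hg.eq_iff]
  have hrange : LinearMap.range (C.submatrix g id).mulVecLin = ⊤ := by
    rw [eq_top_iff, ← (Pi.basisFun ℤ (Fin h)).span_eq, Submodule.span_le]
    rintro _ ⟨j, rfl⟩
    simpa using hsingle j
  exact mulVec_surjective_iff_isUnit.mp (LinearMap.range_eq_top.mp hrange)

lemma isAcyclic_of_det_submatrix_ne_zero {T : SimpleGraph V} (hTG : T ≤ G)
    {g : Fin h → G.edgeSet} (hgT : ∀ i, (g i : Sym2 V) ∉ T.edgeSet)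
    (hdet : (C.submatrix g id).det ≠ 0) : T.IsAcyclic := by
  intro v c hc
  obtain ⟨y, hy⟩ : walkFlow src (c.mapLe hTG) ∈ LinearMap.range C.mulVecLin := by
    rw [hker, LinearMap.mem_ker, mulVecLin_apply, incidence_mulVec_walkFlow hor, sub_self]
  rw [mulVecLin_apply] at hy
  have hy0 : y = 0 := by
    refine eq_zero_of_mulVec_eq_zero hdet (funext fun i => ?_)
    show (C *ᵥ y) (g i) = 0
    have hgc : (g i : Sym2 V) ∉ (c.mapLe hTG).edges := by
      rw [Walk.edges_mapLe_eq_edges]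
      exact fun h => hgT i (c.edges_subset_edgeSet h)
    rw [hy, walkFlow_apply_eq_zero src _ hgc]
  apply walkFlow_ne_zero_of_isCycle src (hc.mapLe hTG)
  rw [← hy, hy0, mulVec_zero]

lemma sq_det_submatrix_enumOfCard [Nonempty V]
    (hh : (h : ℤ) = Fintype.card G.edgeSet - Fintype.card V + 1)
    (S : {S : Finset G.edgeSet // S.card = h}) :
    (C.submatrix (enumOfCard S) id).det ^ 2 =
      if (G.deleteEdges (Subtype.val '' (S.1 : Set G.edgeSet))).IsTree then 1 else 0 := by
  have hST : ∀ i, (enumOfCard S i : Sym2 V) ∉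
      (G.deleteEdges (Subtype.val '' (S.1 : Set G.edgeSet))).edgeSet := by
    simp [edgeSet_deleteEdges, enumOfCard_mem]
  split_ifs with hT
  · exact Int.isUnit_sq <| (isUnit_iff_isUnit_det _).mp <| isUnit_submatrix_of_preconnected hor
      hker (deleteEdges_le _) hT.connected.preconnected (enumOfCard S).injective hST
  · refine (pow_eq_zero_iff two_ne_zero).mpr (by_contra fun hdet => hT ?_)
    have hcard := card_edgeSet_deleteEdges_add_card S.1
    refine (isAcyclic_of_det_submatrix_ne_zero hor hker (deleteEdges_le _) hST hdet
      ).isTree_of_card_edgeSet ?_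
    rw [Nat.card_eq_fintype_card (α := V)]
    have hS := S.2
    omega

end Cotrees

theorem det_graphLap_eq_kirchhoff_general {V : Type*} [Fintype V]
    (G : SimpleGraph V) (hG : G.Connected)
    (src tgt : G.edgeSet → V)
    (hor : ∀ e : G.edgeSet, (e : Sym2 V) = s(src e, tgt e))
    (h : ℕ)
    (hh : (h : ℤ) = (Fintype.card G.edgeSet : ℤ) - Fintype.card V + 1)
    (C : Matrix G.edgeSet (Fin h) ℤ)
    (hker : LinearMap.range C.mulVecLin =
      LinearMap.ker (incidence G src tgt).mulVecLin)
    (x : G.edgeSet → ℝ) :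
    (graphLap C x).det = kirchhoff G x := by
  have : Nonempty V := hG.nonempty
  rw [graphLap, det_transpose_mul_diagonal_mul, kirchhoff_eq_sum_isTree_deleteEdges hh]
  refine sum_congr rfl fun S _ => ?_
  rw [submatrix_map, ← Int.cast_det, ← Int.cast_pow, sq_det_submatrix_enumOfCard hor hker hh]
  split_ifs <;> simp

/-- Matrix-tree theorem: `det Λ_G(x) = Ψ_G(x)` for any cycle basis matrix `C`. -/
theorem det_graphLap_eq_kirchhoff {V : Type*} [Fintype V]
    (G : SimpleGraph V) (hG : G.Connected)
    (src tgt : G.edgeSet → V)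
    (hor : ∀ e : G.edgeSet, (e : Sym2 V) = s(src e, tgt e))
    (h : ℕ)
    (hh : (h : ℤ) = (Fintype.card G.edgeSet : ℤ) - Fintype.card V + 1)
    (C : Matrix G.edgeSet (Fin h) ℤ)
    (hinj : Function.Injective C.mulVecLin)
    (hker : LinearMap.range C.mulVecLin =
      LinearMap.ker (incidence G src tgt).mulVecLin)
    (x : G.edgeSet → ℝ) :
    (graphLap C x).det = kirchhoff G x :=
  det_graphLap_eq_kirchhoff_general G hG src tgt hor h hh C hker x
end

section
/- Let G be a finite connected simple graph with edge set E, fixed orientation, incidence matrix B, h = |E| − |V| + 1, cycle basis matrix C, and graph Laplacian Λ_G(x) = Cᵀ · diagonal(x) · C. If x : E → ℝ satisfies x(e) > 0 for every edge e, then the symmetric matrix Λ_G(x) is positive definite. -/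
/-!
`Λ_G(x) = Cᵀ · diagonal(x) · C` with `diagonal(x)` positive definite, so `Λ_G(x)` is positive
definite once `C` is injective over `ℝ`. Injectivity over `ℤ` passes to `ℝ` through the Gram
determinant: `det (Cᵀ C)` is a nonzero integer, since `Cᵀ C v = 0` forces `‖C v‖² = 0`.
-/

open scoped Classical

namespace Matrix

variable {m n R S : Type*} [Fintype m] [Fintype n]

theorem det_transpose_mul_self_ne_zero [CommRing R] [LinearOrder R] [IsStrictOrderedRing R]
    [DecidableEq n] (A : Matrix m n R) (hA : Function.Injective A.mulVec) :
    (Aᵀ * A).det ≠ 0 := by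
  intro hdet
  obtain ⟨v, hv, hgram⟩ := exists_mulVec_eq_zero_iff.mpr hdet
  have hnorm : (A *ᵥ v) ⬝ᵥ (A *ᵥ v) = 0 := by
    rw [dotProduct_mulVec, ← mulVec_transpose, mulVec_mulVec, hgram, zero_dotProduct]
  exact hv (hA.eq_iff' (mulVec_zero A) |>.mp (dotProduct_self_eq_zero.mp hnorm))

theorem mulVec_injective_map [CommRing R] [LinearOrder R] [IsStrictOrderedRing R]
    [CommRing S] [NoZeroDivisors S] [DecidableEq n] {f : R →+* S} (hf : Function.Injective f)
    {A : Matrix m n R} (hA : Function.Injective A.mulVec) :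
    Function.Injective (A.map f).mulVec := by
  have hdet : ((A.map f)ᵀ * A.map f).det ≠ 0 := by
    rw [← transpose_map, ← Matrix.map_mul, ← RingHom.mapMatrix_apply, ← RingHom.map_det]
    exact (map_ne_zero_iff f hf).mpr (A.det_transpose_mul_self_ne_zero hA)
  refine Function.Injective.of_comp (f := ((A.map f)ᵀ).mulVec) ?_
  simpa only [Function.comp_def, mulVec_mulVec] using mulVec_injective_of_det_ne_zero hdet

end Matrix

open Matrix

theorem graphLap_posDef_general {V : Type*} [Fintype V]
    (G : SimpleGraph V)
    (h : ℕ)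
    (C : Matrix G.edgeSet (Fin h) ℤ)
    (hinj : Function.Injective C.mulVecLin)
    (x : G.edgeSet → ℝ) (hx : ∀ e, 0 < x e) :
    (graphLap C x).PosDef := by
  have hCr : Function.Injective (C.map (Int.cast : ℤ → ℝ)).mulVec :=
    mulVec_injective_map (f := Int.castRingHom ℝ) Int.cast_injective hinj
  rw [graphLap, ← conjTranspose_eq_transpose_of_trivial]
  refine PosDef.conjTranspose_mul_mul_same ?_ hCr
  simpa using hx

/-- If all edge variables are strictly positive, then the graph Laplacian
`Λ_G(x)` is positive definite. -/
theorem graphLap_posDef {V : Type*} [Fintype V]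
    (G : SimpleGraph V) (hG : G.Connected)
    (src tgt : G.edgeSet → V)
    (hor : ∀ e : G.edgeSet, (e : Sym2 V) = s(src e, tgt e))
    (h : ℕ)
    (hh : (h : ℤ) = (Fintype.card G.edgeSet : ℤ) - Fintype.card V + 1)
    (C : Matrix G.edgeSet (Fin h) ℤ)
    (hinj : Function.Injective C.mulVecLin)
    (hker : LinearMap.range C.mulVecLin =
      LinearMap.ker (incidence G src tgt).mulVecLin)
    (x : G.edgeSet → ℝ) (hx : ∀ e, 0 < x e) :
    (graphLap C x).PosDef :=
  graphLap_posDef_general G h C hinj x hx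
end

section
/- Let n ≥ 1, let X be an invertible real m×m matrix, and let V₁, …, V_n be real m×m matrices. Then φⁿ_{Xᵀ}(V₁ᵀ, …, V_nᵀ) = (−1)^{n(n−1)/2} · φⁿ_X(V₁, …, V_n). (Transpose behaviour of the canonical forms: ωⁿ_{Xᵀ} = (−1)^{n(n−1)/2} ωⁿ_X.) -/
/-!
Since `(Xᵀ)⁻¹ Vᵀ = (V X⁻¹)ᵀ` and transposition reverses products, the trace of
`∏ᵢ (Xᵀ)⁻¹ V_{σ i}ᵀ` is the trace of `∏ᵢ V_{σ(rev i)} X⁻¹`, and cyclicity of the trace moves the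
last `X⁻¹` to the front, giving `tr ∏ᵢ X⁻¹ V_{σ(rev i)}`. Reindexing the alternating sum by
`σ ↦ σ ∘ rev` produces the factor `sign rev = (-1)^(n(n-1)/2)`; this sign follows by induction from
`rev ∘ finRotate (n + 1) = rev` on `Fin n`, extended by a fixed point.
-/

/-- The value `φⁿ_X(V₁, …, V_n) = ∑_σ sign(σ)·tr((X⁻¹V_{σ(1)})⋯(X⁻¹V_{σ(n)}))`
of the bi-invariant form `ωⁿ_X = tr((X⁻¹ dX)ⁿ)` at `X` on tangent vectors
`V₁, …, V_n` (factorial-free convention). -/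
noncomputable def phiForm {m : ℕ} (n : ℕ) (X : Matrix (Fin m) (Fin m) ℝ)
    (Vs : Fin n → Matrix (Fin m) (Fin m) ℝ) : ℝ :=
  ∑ σ : Equiv.Perm (Fin n),
    ((Equiv.Perm.sign σ : ℤ) : ℝ) *
      (List.ofFn (fun i => X⁻¹ * Vs (σ i))).prod.trace

theorem List.reverse_ofFn {α : Type*} {n : ℕ} (f : Fin n → α) :
    (List.ofFn f).reverse = List.ofFn (f ∘ Fin.rev) := by
  rw [List.ofFn_eq_map, ← List.map_reverse, List.finRange_reverse, List.map_map,
    List.ofFn_eq_map]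

theorem List.mul_prod_map_mul_right {M : Type*} [Monoid M] (c : M) (l : List M) :
    c * (l.map (· * c)).prod = (l.map (c * ·)).prod * c := by
  induction l with
  | nil => simp
  | cons a l ih => simp only [List.map_cons, List.prod_cons, mul_assoc, ih]

namespace Matrix

variable {ι R : Type*} [Fintype ι] [DecidableEq ι] [CommSemiring R]

theorem trace_list_prod_map_mul_right (c : Matrix ι ι R) (l : List (Matrix ι ι R)) :
    trace (l.map (· * c)).prod = trace (l.map (c * ·)).prod := by
  cases l with
  | nil => rfl
  | cons a l =>
    calc trace (a * c * (l.map (· * c)).prod)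
        = trace (a * ((l.map (c * ·)).prod * c)) := by
          rw [mul_assoc, List.mul_prod_map_mul_right]
      _ = trace (c * a * (l.map (c * ·)).prod) := by
          rw [← mul_assoc, trace_mul_comm, mul_assoc]

theorem trace_prod_ofFn_transpose_mul_transpose {n : ℕ} (c : Matrix ι ι R)
    (W : Fin n → Matrix ι ι R) :
    trace (List.ofFn fun i => cᵀ * (W i)ᵀ).prod = trace (List.ofFn fun i => c * W i.rev).prod := by
  have hfactor : (fun i => cᵀ * (W i)ᵀ) = fun i => (W i * c)ᵀ := by
    funext i; rw [transpose_mul]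
  rw [hfactor, ← trace_transpose, transpose_list_prod, List.map_ofFn, List.reverse_ofFn]
  simpa [Function.comp_def] using
    trace_list_prod_map_mul_right c (List.ofFn fun i => W i.rev)

end Matrix

namespace Equiv.Perm

theorem sum_sign_mul_comp_mul_right {α R : Type*} [Fintype α] [DecidableEq α] [CommRing R]
    (τ : Perm α) (f : Perm α → R) :
    ∑ σ, ((sign σ : ℤ) : R) * f (σ * τ) = ((sign τ : ℤ) : R) * ∑ σ, ((sign σ : ℤ) : R) * f σ := by
  have hsq : ((sign τ : ℤ) : R) * ((sign τ : ℤ) : R) = 1 := by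
    rw [← Int.cast_mul, ← Units.val_mul, Int.units_mul_self, Units.val_one, Int.cast_one]
  rw [Finset.mul_sum]
  refine Fintype.sum_equiv (Equiv.mulRight τ) _ _ fun σ => ?_
  rw [coe_mulRight, sign_mul, Units.val_mul, Int.cast_mul]
  linear_combination (↑↑(sign σ) * f (σ * τ)) * hsq.symm

theorem revPerm_mul_finRotate (n : ℕ) :
    (Fin.revPerm : Perm (Fin (n + 1))) * finRotate (n + 1) =
      (Fin.revPerm : Perm (Fin n)).viaFintypeEmbedding Fin.castSuccEmb := by
  refine Equiv.ext fun i => Fin.lastCases ?_ (fun j => ?_) i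
  · rw [viaFintypeEmbedding_apply_notMem_range _ _ (by simp)]
    simp
  · rw [mul_apply, finRotate_apply, Fin.coeSucc_eq_succ, Fin.revPerm_apply, Fin.rev_succ]
    exact (viaFintypeEmbedding_apply_image Fin.revPerm Fin.castSuccEmb j).symm

theorem sign_revPerm (n : ℕ) :
    sign (Fin.revPerm : Perm (Fin n)) = (-1) ^ (n * (n - 1) / 2) := by
  induction n with
  | zero => rfl
  | succ n ih =>
    have h := congrArg sign (revPerm_mul_finRotate n)
    rw [sign_mul, sign_finRotate, viaFintypeEmbedding_sign, ih, Nat.add_sub_cancel] at h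
    rw [Nat.triangle_succ, pow_add, ← h, mul_assoc, ← mul_pow, Int.units_mul_self, one_pow,
      mul_one]

end Equiv.Perm

theorem phiForm_transpose_general {m : ℕ} (n : ℕ)
    (X : Matrix (Fin m) (Fin m) ℝ)
    (Vs : Fin n → Matrix (Fin m) (Fin m) ℝ) :
    phiForm n X.transpose (fun i => (Vs i).transpose) =
      (-1 : ℝ) ^ (n * (n - 1) / 2) * phiForm n X Vs := by
  have hsign : ((Equiv.Perm.sign (Fin.revPerm : Equiv.Perm (Fin n)) : ℤ) : ℝ) =
      (-1 : ℝ) ^ (n * (n - 1) / 2) := by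
    simp [Equiv.Perm.sign_revPerm]
  simp only [phiForm, ← Matrix.transpose_nonsing_inv,
    Matrix.trace_prod_ofFn_transpose_mul_transpose]
  exact hsign ▸ Equiv.Perm.sum_sign_mul_comp_mul_right Fin.revPerm
    fun σ => (List.ofFn fun i => X⁻¹ * Vs (σ i)).prod.trace

/-- Transpose behaviour of the canonical forms:
`φⁿ_{Xᵀ}(V₁ᵀ, …, V_nᵀ) = (−1)^{n(n−1)/2} · φⁿ_X(V₁, …, V_n)`. -/
theorem phiForm_transpose {m : ℕ} (n : ℕ) (hn : 1 ≤ n)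
    (X : Matrix (Fin m) (Fin m) ℝ) (hX : IsUnit X)
    (Vs : Fin n → Matrix (Fin m) (Fin m) ℝ) :
    phiForm n X.transpose (fun i => (Vs i).transpose) =
      (-1 : ℝ) ^ (n * (n - 1) / 2) * phiForm n X Vs :=
  phiForm_transpose_general n X Vs
end

section
/- Let n ≥ 3 satisfy n ≡ 3 (mod 4), let X be an invertible symmetric real m×m matrix, and let V₁, …, V_n be symmetric real m×m matrices. Then φⁿ_X(V₁, …, V_n) = 0. (The canonical form ωⁿ vanishes on symmetric matrices when n ≡ 3 mod 4.) -/
open Equiv Matrix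

section Aux

lemma list_reverse_ofFn {α : Type*} {n : ℕ} (f : Fin n → α) :
    (List.ofFn f).reverse = List.ofFn (fun i => f i.rev) := by
  apply List.ext_getElem
  · simp
  · intro i h1 h2
    simp only [List.length_reverse, List.length_ofFn] at h1
    rw [List.getElem_reverse, List.getElem_ofFn, List.getElem_ofFn]
    congr 1
    apply Fin.ext
    simp [Fin.val_rev]
    omega

lemma shuttle {M : Type*} [Monoid M] (P : M) :
    ∀ (n : ℕ) (Q : Fin n → M),
      (List.ofFn fun i => P * Q i).prod * P = P * (List.ofFn fun i => Q i * P).prod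
  | 0, _ => by simp
  | (n+1), Q => by
      rw [List.ofFn_succ, List.ofFn_succ, List.prod_cons, List.prod_cons,
        mul_assoc (P * Q 0), shuttle P n (fun i => Q i.succ)]
      simp [mul_assoc]

lemma revPerm_succ_decomp (n : ℕ) :
    (Fin.revPerm : Perm (Fin (n+1))) =
      Equiv.Perm.decomposeFin.symm (Fin.last n, Fin.revPerm * finRotate n) := by
  ext x
  refine Fin.cases ?_ (fun i => ?_) x
  · simp [Equiv.Perm.decomposeFin_symm_apply_zero]
  · rw [Equiv.Perm.decomposeFin_symm_apply_succ]
    cases n with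
    | zero => exact i.elim0
    | succ k =>
      simp only [Perm.mul_apply, finRotate_succ_apply, Fin.revPerm_apply]
      rcases eq_or_ne i (Fin.last k) with rfl | h
      · simp
      · have hiv : i.val < k :=
          lt_of_le_of_ne (Nat.lt_succ_iff.mp i.isLt) (fun hh => h (Fin.ext hh))
        have hx : ((i + 1 : Fin (k+1))).val = i.val + 1 := by
          rw [Fin.val_add_one]; simp [h]
        rw [Equiv.swap_apply_of_ne_of_ne]
        · simp only [Fin.ext_iff, Fin.val_rev, Fin.val_succ, hx]
          omega
        · intro hc
          apply_fun Fin.val at hc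
          simp [Fin.val_rev, hx] at hc
        · intro hc
          apply_fun Fin.val at hc
          simp [Fin.val_rev, hx, Fin.val_last] at hc
          omega

lemma sign_revPerm : ∀ n : ℕ,
    Equiv.Perm.sign (Fin.revPerm : Perm (Fin n)) = (-1) ^ (n * (n - 1) / 2)
  | 0 => by
      have : (Fin.revPerm : Perm (Fin 0)) = 1 := Subsingleton.elim _ _
      simp [this]
  | 1 => by
      have : (Fin.revPerm : Perm (Fin 1)) = 1 := Subsingleton.elim _ _
      simp [this]
  | (n+2) => by
      rw [revPerm_succ_decomp (n+1), Equiv.Perm.decomposeFin.symm_sign,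
        _root_.map_mul, sign_revPerm (n+1), sign_finRotate]
      have hlast : (Fin.last (n+1)) ≠ 0 := by simp [Fin.ext_iff]
      rw [if_neg hlast]
      have h2 : 2 ∣ (n+1) * n := by rw [Nat.mul_comm]; exact (Nat.even_mul_succ_self n).two_dvd
      obtain ⟨c, hc⟩ := h2
      have harith : (n+2) * (n+2-1) / 2 = (n+1) * (n+1-1) / 2 + 1 + n := by
        have e1 : (n+2) * (n+2-1) = 2*c + 2 + 2*n := by
          have h3 : n+2-1 = n+1 := by omega
          rw [h3]; nlinarith [hc]
        have e2 : (n+1) * (n+1-1) = 2*c := by rw [Nat.add_sub_cancel]; exact hc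
        rw [e1, e2]
        omega
      rw [harith, pow_add, pow_add, pow_one]
      simp [mul_comm, mul_left_comm, mul_assoc]

end Aux


/-- The canonical form `ωⁿ` vanishes on symmetric matrices when
`n ≡ 3 (mod 4)`. -/
theorem phiForm_symm_eq_zero {m : ℕ} (n : ℕ) (hn : 3 ≤ n) (hmod : n % 4 = 3)
    (X : Matrix (Fin m) (Fin m) ℝ) (hX : IsUnit X) (hXs : X.IsSymm)
    (Vs : Fin n → Matrix (Fin m) (Fin m) ℝ) (hVs : ∀ i, (Vs i).IsSymm) :
    phiForm n X Vs = 0 := by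
  classical
  have hdet : IsUnit X.det := (Matrix.isUnit_iff_isUnit_det X).mp hX
  have hXinv : (X⁻¹)ᵀ = X⁻¹ := by
    rw [Matrix.transpose_nonsing_inv, hXs]
  -- trace of a term is invariant under precomposition by reversal
  have htr : ∀ σ : Perm (Fin n),
      (List.ofFn (fun i => X⁻¹ * Vs (σ i.rev))).prod.trace
        = (List.ofFn (fun i => X⁻¹ * Vs (σ i))).prod.trace := by
    intro σ
    have step1 : (List.ofFn (fun i => X⁻¹ * Vs (σ i))).prod.trace
        = (List.ofFn (fun i => Vs (σ i.rev) * X⁻¹)).prod.trace := by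
      have hVt : ∀ j, (Vs j)ᵀ = Vs j := fun j => hVs j
      rw [← Matrix.trace_transpose ((List.ofFn fun i => X⁻¹ * Vs (σ i)).prod),
        Matrix.transpose_list_prod, List.map_ofFn, list_reverse_ofFn]
      simp only [Function.comp_apply, Matrix.transpose_mul, hXinv, hVt]
    have key := shuttle (X⁻¹) n (fun i => Vs (σ i.rev))
    have step2 : (List.ofFn (fun i => Vs (σ i.rev) * X⁻¹)).prod.trace
        = (List.ofFn (fun i => X⁻¹ * Vs (σ i.rev))).prod.trace := by
      have h1 : (List.ofFn (fun i => X⁻¹ * Vs (σ i.rev))).prod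
          = X⁻¹ * ((List.ofFn (fun i => Vs (σ i.rev) * X⁻¹)).prod * X) := by
        rw [← mul_assoc]
        calc (List.ofFn (fun i => X⁻¹ * Vs (σ i.rev))).prod
            = (List.ofFn (fun i => X⁻¹ * Vs (σ i.rev))).prod * (X⁻¹ * X) := by
              rw [Matrix.nonsing_inv_mul X hdet, mul_one]
          _ = ((List.ofFn (fun i => X⁻¹ * Vs (σ i.rev))).prod * X⁻¹) * X := by
              rw [mul_assoc]
          _ = (X⁻¹ * (List.ofFn (fun i => Vs (σ i.rev) * X⁻¹)).prod) * X := by rw [key]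
      rw [h1, Matrix.trace_mul_comm, mul_assoc, Matrix.mul_nonsing_inv X hdet, mul_one]
    rw [← step2, ← step1]
  -- the sum is invariant under σ ↦ σ * rev, but each term flips sign
  have hodd : Odd (n * (n - 1) / 2) := by
    obtain ⟨k, hk⟩ : ∃ k, n = 4 * k + 3 := ⟨n / 4, by omega⟩
    have h1 : n * (n - 1) = 2 * (8 * k ^ 2 + 10 * k + 3) := by
      subst hk
      have : 4 * k + 3 - 1 = 4 * k + 2 := by omega
      rw [this]; ring
    refine ⟨4 * k ^ 2 + 5 * k + 1, ?_⟩
    omega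
  have hs : Equiv.Perm.sign (Fin.revPerm : Perm (Fin n)) = -1 := by
    rw [sign_revPerm n, Odd.neg_one_pow hodd]
  have hflip : phiForm n X Vs = - phiForm n X Vs := by
    unfold phiForm
    rw [← Finset.sum_neg_distrib]
    refine Fintype.sum_equiv (Equiv.mulRight Fin.revPerm) _ _ (fun σ => ?_)
    simp only [Equiv.coe_mulRight, Equiv.Perm.mul_apply, Fin.revPerm_apply]
    rw [htr σ]
    have hs2 : Equiv.Perm.sign (σ * Fin.revPerm) = -Equiv.Perm.sign σ := by
      rw [_root_.map_mul, hs, mul_neg_one]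
    rw [hs2]
    push_cast
    ring
  linarith
end

section
/- Let n ≥ 3 be odd, let X be an invertible real m×m matrix, let V₁, …, V_n be real m×m matrices, and let c₁, …, c_n ∈ ℝ. Then φⁿ_X(V₁ + c₁·X, …, V_n + c_n·X) = φⁿ_X(V₁, …, V_n). (Pointwise form of the projective invariance ωⁿ_{λX} = ωⁿ_X of the canonical forms of degree n > 1.) -/
open Equiv Equiv.Perm

section TraceOfProduct

variable {A M : Type*} [Monoid A]

theorem map_prod_ofFn_comp_finRotate {τ : A → M} (hτ : ∀ a b, τ (a * b) = τ (b * a))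
    {n : ℕ} (w : Fin n → A) :
    τ (List.ofFn (w ∘ finRotate n)).prod = τ (List.ofFn w).prod := by
  cases n with
  | zero => simp
  | succ n =>
    rw [List.ofFn_succ', List.ofFn_succ (f := w)]
    simp [Fin.coeSucc_eq_succ, hτ (w 0)]

theorem map_prod_ofFn_comp_finRotate_pow {τ : A → M} (hτ : ∀ a b, τ (a * b) = τ (b * a))
    {n : ℕ} (w : Fin n → A) (j : ℕ) :
    τ (List.ofFn (w ∘ ⇑(finRotate n ^ j))).prod = τ (List.ofFn w).prod := by
  induction j generalizing w with
  | zero => simp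
  | succ j ih => rw [pow_succ, coe_mul, ← Function.comp_assoc, map_prod_ofFn_comp_finRotate hτ, ih]

theorem prod_ofFn_comp_swap_zero_one {n : ℕ} (w : Fin (n + 2) → A) (hw : w 0 = 1) :
    (List.ofFn (w ∘ swap 0 1)).prod = (List.ofFn w).prod := by
  have hfix : ∀ i : Fin n, swap (0 : Fin (n + 2)) 1 i.succ.succ = i.succ.succ := fun i =>
    swap_apply_of_ne_of_ne (Fin.succ_ne_zero _) (Fin.succ_succ_ne_one _)
  simp [List.ofFn_succ, hfix, hw]

theorem finRotate_pow_apply_zero {n : ℕ} (i : Fin (n + 1)) :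
    (finRotate (n + 1) ^ (i : ℕ)) 0 = i := by
  induction i using Fin.induction with
  | zero => simp
  | succ i ih =>
    rw [Fin.val_castSucc] at ih
    rw [Fin.val_succ, pow_succ', mul_apply, ih, finRotate_apply, Fin.coeSucc_eq_succ]

theorem swap_finRotate_eq_conj {n : ℕ} (i : Fin (n + 1)) :
    swap i (finRotate (n + 1) i) = finRotate (n + 1) ^ (i : ℕ) * swap 0 (finRotate (n + 1) 0) *
      (finRotate (n + 1) ^ (i : ℕ))⁻¹ := by
  conv_lhs => rw [← finRotate_pow_apply_zero i, ← mul_apply, ← pow_succ', pow_succ, mul_apply]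
  exact swap_apply_apply _ _ _

theorem map_prod_ofFn_comp_swap_finRotate {τ : A → M} (hτ : ∀ a b, τ (a * b) = τ (b * a))
    {n : ℕ} (w : Fin (n + 2) → A) (i : Fin (n + 2)) (hw : w i = 1) :
    τ (List.ofFn (w ∘ swap i (finRotate (n + 2) i))).prod = τ (List.ofFn w).prod := by
  set P := finRotate (n + 2) ^ (i : ℕ)
  have hP : w (P 0) = 1 := by rw [finRotate_pow_apply_zero, hw]
  calc τ (List.ofFn (w ∘ swap i (finRotate (n + 2) i))).prod
      = τ (List.ofFn (w ∘ swap i (finRotate (n + 2) i) ∘ P)).prod :=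
        (map_prod_ofFn_comp_finRotate_pow hτ _ i).symm
    _ = τ (List.ofFn ((w ∘ P) ∘ swap 0 1)).prod := by
        rw [swap_finRotate_eq_conj, finRotate_apply_zero]
        simp [Function.comp_def, P]
    _ = τ (List.ofFn (w ∘ P)).prod := by rw [prod_ofFn_comp_swap_zero_one _ hP]
    _ = τ (List.ofFn w).prod := map_prod_ofFn_comp_finRotate_pow hτ _ i

theorem sum_sign_smul_map_prod_ofFn_eq_zero [AddCommGroup M] [IsAddTorsionFree M] {τ : A → M}
    (hτ : ∀ a b, τ (a * b) = τ (b * a)) {n : ℕ} (hn : 2 ≤ n) (w : Fin n → A) (k : Fin n)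
    (hk : w k = 1) :
    ∑ σ : Perm (Fin n), sign σ • τ (List.ofFn (w ∘ σ)).prod = 0 := by
  obtain ⟨n, rfl⟩ := Nat.exists_eq_add_of_le' hn
  set r := finRotate (n + 2)
  let T : Perm (Fin (n + 2)) → Perm (Fin (n + 2)) := fun σ => σ * swap (σ⁻¹ k) (r (σ⁻¹ k))
  have hT_inv_apply : ∀ σ, (T σ)⁻¹ k = r (σ⁻¹ k) := fun σ => by
    simp [T, mul_inv_rev, swap_inv]
  have hT : Function.Bijective T := by
    refine Finite.injective_iff_bijective.mp fun σ σ' h => ?_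
    have : σ⁻¹ k = σ'⁻¹ k := r.injective (by rw [← hT_inv_apply, ← hT_inv_apply, h])
    simp only [T, this] at h
    exact mul_right_cancel h
  have hsign : ∀ σ, sign (T σ) = - sign σ := fun σ => by
    rw [Perm.sign_mul, sign_swap (mem_support.mp (by simp [r])).symm, mul_neg_one]
  have hterm : ∀ σ, τ (List.ofFn (w ∘ T σ)).prod = τ (List.ofFn (w ∘ σ)).prod := fun σ => by
    simp only [T, coe_mul, ← Function.comp_assoc]
    exact map_prod_ofFn_comp_swap_finRotate hτ _ _ (by simp [hk])
  rw [← neg_eq_self, ← Finset.sum_neg_distrib]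
  exact Fintype.sum_bijective T hT _ _ fun σ => by rw [hsign, hterm, Units.neg_smul]

end TraceOfProduct

theorem MultilinearMap.map_add_smul_eq_of_map_eq_zero {R ι N M : Type*} [Semiring R]
    [AddCommMonoid N] [Module R N] [AddCommMonoid M] [Module R M] [Fintype ι] [DecidableEq ι]
    (f : MultilinearMap R (fun _ : ι => N) M) (a : N) (hf : ∀ v k, v k = a → f v = 0)
    (v : ι → N) (c : ι → R) : f (v + fun i => c i • a) = f v := by
  rw [map_add_univ, Finset.sum_eq_single Finset.univ, Finset.piecewise_univ]
  · intro s _ hs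
    obtain ⟨k, hk⟩ : ∃ k, k ∉ s := by simpa [Finset.eq_univ_iff_forall] using hs
    rw [← Function.update_eq_self k (s.piecewise _ _), Finset.piecewise_eq_of_notMem _ _ _ hk,
      f.map_update_smul, hf _ k (Function.update_self ..), smul_zero]
  · simp

section AlternatingTraceForm

variable {R A M : Type*} [CommSemiring R] [Semiring A] [Algebra R A] [AddCommGroup M] [Module R M]

noncomputable def alternatingTraceForm (τ : A →ₗ[R] M) (n : ℕ) : A [⋀^Fin n]→ₗ[R] M :=
  MultilinearMap.alternatization (τ.compMultilinearMap (MultilinearMap.mkPiAlgebraFin R n A))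

theorem alternatingTraceForm_apply (τ : A →ₗ[R] M) {n : ℕ} (v : Fin n → A) :
    alternatingTraceForm τ n v = ∑ σ : Perm (Fin n), sign σ • τ (List.ofFn (v ∘ σ)).prod := by
  simp [alternatingTraceForm, MultilinearMap.alternatization_apply, Function.comp_def]

theorem alternatingTraceForm_add_smul_one [IsAddTorsionFree M] {τ : A →ₗ[R] M}
    (hτ : ∀ a b, τ (a * b) = τ (b * a)) {n : ℕ} (hn : 2 ≤ n) (v : Fin n → A) (c : Fin n → R) :
    alternatingTraceForm τ n (v + fun i => c i • 1) = alternatingTraceForm τ n v :=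
  (alternatingTraceForm τ n).toMultilinearMap.map_add_smul_eq_of_map_eq_zero 1
    (fun w k hk => by
      rw [AlternatingMap.coe_multilinearMap, alternatingTraceForm_apply]
      exact sum_sign_smul_map_prod_ofFn_eq_zero hτ hn w k hk) v c

end AlternatingTraceForm

theorem phiForm_eq_alternatingTraceForm {m n : ℕ} (X : Matrix (Fin m) (Fin m) ℝ)
    (Vs : Fin n → Matrix (Fin m) (Fin m) ℝ) :
    phiForm n X Vs = alternatingTraceForm (Matrix.traceLinearMap (Fin m) ℝ ℝ) n (X⁻¹ * Vs ·) := by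
  simp [phiForm, alternatingTraceForm_apply, Units.smul_def, Function.comp_def]

theorem phiForm_projective_invariance_general {m : ℕ} (n : ℕ) (hn : 3 ≤ n)
    (X : Matrix (Fin m) (Fin m) ℝ) (hX : IsUnit X)
    (Vs : Fin n → Matrix (Fin m) (Fin m) ℝ) (c : Fin n → ℝ) :
    phiForm n X (fun i => Vs i + c i • X) = phiForm n X Vs := by
  have hXX : X⁻¹ * X = 1 := Matrix.nonsing_inv_mul X ((Matrix.isUnit_iff_isUnit_det X).mp hX)
  have hshift : (fun i => X⁻¹ * (Vs i + c i • X)) = (X⁻¹ * Vs ·) + fun i => c i • 1 := by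
    ext1 i
    rw [Pi.add_apply, mul_add, Matrix.mul_smul, hXX]
  rw [phiForm_eq_alternatingTraceForm, phiForm_eq_alternatingTraceForm, hshift,
    alternatingTraceForm_add_smul_one Matrix.trace_mul_comm (by omega)]

/-- Pointwise form of the projective invariance `ωⁿ_{λX} = ωⁿ_X` of the
canonical forms of odd degree `n ≥ 3`. -/
theorem phiForm_projective_invariance {m : ℕ} (n : ℕ) (hn : 3 ≤ n)
    (hodd : Odd n)
    (X : Matrix (Fin m) (Fin m) ℝ) (hX : IsUnit X)
    (Vs : Fin n → Matrix (Fin m) (Fin m) ℝ) (c : Fin n → ℝ) :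
    phiForm n X (fun i => Vs i + c i • X) = phiForm n X Vs :=
  phiForm_projective_invariance_general n hn X hX Vs c
end
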